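/- arXiv:math/0310084 — 2 statements merged into one kernel-verified Lean document; each statement's English description precedes it below -/
import Mathlib

section
/- Let L be a negative definite lattice with basis {E_j}, L' its dual in L⊗Q, and NE_Q the cone {x : (x,E_j) ≥ 0 ∀j}. For every class h ∈ L'/L, the intersection (l' + L) ∩ NE_Q (for any representative l' of h) has a unique maximal element l'_{ne}(h) with respect to the coordinatewise order, and the intersection (l' + L) ∩ (−NE_Q) has a unique minimal element \bar{l}'_{ne}(h); moreover \bar{l}'_{ne}(h) = −l'_{ne}(−h). -/
open Matrix

variable {J : Type*}

/-- The rational bilinear (intersection) form associated with the integral matrix `B`. -/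
def bform [Fintype J] (B : Matrix J J ℤ) (x y : J → ℚ) : ℚ :=
  x ⬝ᵥ (B.map (fun n => (n : ℚ))).mulVec y

/-- `B` is negative definite as a rational quadratic form. -/
def NegDef [Fintype J] (B : Matrix J J ℤ) : Prop :=
  ∀ x : J → ℚ, x ≠ 0 → bform B x x < 0

/-- Membership in the lattice `L` (integral coordinates in the basis `E_j`). -/
def isLat (x : J → ℚ) : Prop := ∀ j, ∃ m : ℤ, x j = (m : ℚ)

/-- Membership in the dual lattice `L' ⊂ L ⊗ ℚ`. -/
def isDual [Fintype J] [DecidableEq J] (B : Matrix J J ℤ) (x : J → ℚ) : Prop :=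
  ∀ j, ∃ m : ℤ, bform B x (Pi.single j 1) = (m : ℚ)

/-- Membership in the anti-nef cone `NE_ℚ = {x : (x,E_j) ≥ 0 ∀ j}`. -/
def inNE [Fintype J] [DecidableEq J] (B : Matrix J J ℤ) (x : J → ℚ) : Prop :=
  ∀ j, 0 ≤ bform B x (Pi.single j 1)

/-- Effective rational cycles: all coordinates nonnegative. -/
def Effective (x : J → ℚ) : Prop := ∀ j, 0 ≤ x j

/-- `χ(x) = -(x, x+K)/2` (Riemann–Roch). -/
def chi [Fintype J] (B : Matrix J J ℤ) (K x : J → ℚ) : ℚ := -(bform B x (x + K)) / 2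

/-!
Off-diagonal nonnegativity makes `NE_ℚ = {x | 0 ≤ x ᵥ* B}` closed under coordinatewise max,
and negative definiteness puts it in the nonpositive orthant (pair `x` with its positive part).
Every class `l' + L` meets `NE_ℚ`, since some integral vector pairs positively with every `E_j`.
Hence the representatives of a class in `NE_ℚ` form a nonempty, bounded above, `⊔`-closed subset
of a translate of `ℤ^J`, which has a greatest element. The statements about `-NE_ℚ` follow by
applying `x ↦ -x`, which maps the class of `-l'` onto that of `l'`.
-/

section Lattice

lemma isLat_neg_iff {a : J → ℚ} : isLat (-a) ↔ isLat a := by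
  refine ⟨fun h j => ?_, fun h j => ?_⟩ <;> obtain ⟨m, hm⟩ := h j
  · exact ⟨-m, by simpa [neg_eq_iff_eq_neg] using hm⟩
  · exact ⟨-m, by simp [hm]⟩

lemma isLat_intCast (v : J → ℤ) : isLat (fun j => (v j : ℚ)) := fun j => ⟨v j, rfl⟩

lemma supClosed_isLat_sub (l' : J → ℚ) : SupClosed {x : J → ℚ | isLat (x - l')} := by
  intro x hx y hy j
  obtain ⟨m, hm⟩ := hx j
  obtain ⟨n, hn⟩ := hy j
  refine ⟨max m n, ?_⟩
  simp only [Pi.sub_apply, Pi.sup_apply] at hm hn ⊢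
  rw [← max_sub_sub_right, hm, hn, Int.cast_max]

variable [Fintype J]

lemma isLat.exists_sum_eq {a : J → ℚ} (ha : isLat a) : ∃ m : ℤ, ∑ j, a j = m := by
  choose m hm using ha
  exact ⟨∑ j, m j, by push_cast [hm]; rfl⟩

/-- Take `x ∈ S` maximizing the coordinate sum, which is an integer up to a constant: for `y ∈ S`,
`x ⊔ y ∈ S` has no larger sum, so `x ⊔ y = x`. -/
lemma exists_isGreatest_of_supClosed (l' : J → ℚ) {S : Set (J → ℚ)}
    (hlat : ∀ x ∈ S, isLat (x - l')) (hS : SupClosed S) (hne : S.Nonempty) (hbdd : BddAbove S) :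
    ∃ x, IsGreatest S x := by
  obtain ⟨c, hc⟩ := hbdd
  obtain ⟨b, hb⟩ := exists_int_ge (∑ j, (c - l') j)
  have hbound : ∀ m : ℤ, (∃ x ∈ S, ∑ j, (x - l') j = m) → m ≤ b := by
    rintro m ⟨x, hx, hxm⟩
    rw [← Int.cast_le (R := ℚ), ← hxm]
    have : ∑ j, (x - l') j ≤ ∑ j, (c - l') j :=
      Finset.sum_le_sum fun j _ => sub_le_sub_right (hc hx j) _
    exact this.trans hb
  obtain ⟨x₀, hx₀⟩ := hne
  obtain ⟨m₀, hm₀⟩ := (hlat x₀ hx₀).exists_sum_eq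
  obtain ⟨m, ⟨x, hx, hxm⟩, hmax⟩ :=
    Int.exists_greatest_of_bdd ⟨b, hbound⟩ ⟨m₀, x₀, hx₀, hm₀⟩
  refine ⟨x, hx, fun y hy => ?_⟩
  have hxy : x ⊔ y ∈ S := hS hx hy
  obtain ⟨n, hn⟩ := (hlat _ hxy).exists_sum_eq
  have hle : ∀ j ∈ Finset.univ, (x - l') j ≤ (x ⊔ y - l') j :=
    fun j _ => sub_le_sub_right (le_sup_left (a := x) (b := y) j) _
  have hsum : ∑ j, (x - l') j = ∑ j, (x ⊔ y - l') j := by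
    refine le_antisymm (Finset.sum_le_sum hle) ?_
    rw [hxm, hn]
    exact_mod_cast hmax n ⟨_, hxy, hn⟩
  have hsup : x ⊔ y = x := funext fun j =>
    sub_left_inj.mp ((Finset.sum_eq_sum_iff_of_le hle).mp hsum j (Finset.mem_univ j)).symm
  exact hsup ▸ le_sup_right

end Lattice

section Cone

variable [Fintype J] (B : Matrix J J ℤ)

lemma bform_add_left (x y z : J → ℚ) : bform B (x + y) z = bform B x z + bform B y z :=
  add_dotProduct x y _

/-- Only off-diagonal entries of `B` contribute. -/
lemma bform_nonneg_of_mul_eq_zero (hoff : ∀ i j, i ≠ j → 0 ≤ B i j) {p q : J → ℚ}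
    (hp : 0 ≤ p) (hq : 0 ≤ q) (hpq : ∀ i, p i * q i = 0) : 0 ≤ bform B p q := by
  simp only [bform, dotProduct, mulVec, Finset.mul_sum]
  refine Finset.sum_nonneg fun i _ => Finset.sum_nonneg fun j _ => ?_
  rcases eq_or_ne i j with rfl | hij
  · simp [mul_left_comm (p i), hpq i]
  · exact mul_nonneg (hp i) (mul_nonneg (Int.cast_nonneg_iff.mpr (hoff i j hij)) (hq j))

variable [DecidableEq J]

lemma bform_single (x : J → ℚ) (j : J) :
    bform B x (Pi.single j 1) = (x ᵥ* B.map (↑)) j := by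
  rw [bform, dotProduct_mulVec, dotProduct_single_one]

lemma inNE_le_zero (hneg : NegDef B) (hoff : ∀ i j, i ≠ j → 0 ≤ B i j) {x : J → ℚ}
    (hx : inNE B x) : x ≤ 0 := by
  suffices x⁺ = 0 by simpa [this] using le_posPart x
  by_contra hne
  have hx_pos : 0 ≤ bform B x x⁺ := by
    rw [bform, dotProduct_mulVec]
    exact dotProduct_nonneg_of_nonneg (fun j => (bform_single B x j) ▸ hx j) (posPart_nonneg x)
  have hnegPart : 0 ≤ bform B x⁻ x⁺ :=
    bform_nonneg_of_mul_eq_zero B hoff (negPart_nonneg x) (posPart_nonneg x) fun i => by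
      rcases le_total (x i) 0 with h | h <;> simp [h]
  have : bform B x⁺ x⁺ = bform B x x⁺ + bform B x⁻ x⁺ := by
    rw [← bform_add_left, ← sub_eq_iff_eq_add.mp (posPart_sub_negPart x)]
  linarith [hneg _ hne]

lemma bform_single_nonneg_of_le_of_eq {w z : J → ℚ} (hoff : ∀ i j, i ≠ j → 0 ≤ B i j) (hw : inNE B w)
    (hwz : w ≤ z) {j : J} (hj : z j = w j) : 0 ≤ bform B z (Pi.single j 1) := by
  have hdisj : ∀ i, (z - w) i * (Pi.single j 1 : J → ℚ) i = 0 := fun i => by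
    rcases eq_or_ne i j with rfl | hij
    · simp [hj]
    · simp [hij]
  have := bform_nonneg_of_mul_eq_zero B hoff (sub_nonneg.mpr hwz)
    (Pi.single_nonneg.mpr zero_le_one) hdisj
  rw [← add_sub_cancel w z, bform_add_left]
  exact add_nonneg (hw j) this

lemma supClosed_inNE (hoff : ∀ i j, i ≠ j → 0 ≤ B i j) : SupClosed {x : J → ℚ | inNE B x} := by
  intro x hx y hy j
  rcases max_choice (x j) (y j) with h | h
  · exact bform_single_nonneg_of_le_of_eq B hoff hx le_sup_left h
  · exact bform_single_nonneg_of_le_of_eq B hoff hy le_sup_right h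

lemma det_ne_zero_of_negDef (hneg : NegDef B) : B.det ≠ 0 := by
  intro hdet
  obtain ⟨v, hv, hBv⟩ := exists_mulVec_eq_zero_iff.mpr
    (by simpa [hdet] using ((Int.castRingHom ℚ).map_det B).symm)
  have := hneg v hv
  rw [bform, hBv, dotProduct_zero] at this
  exact this.false

/-- The vector `det B • (1 ᵥ* adj B)` pairs with every `E_j` to `(det B)² > 0`. -/
lemma exists_vecMul_pos (hneg : NegDef B) : ∃ u : J → ℤ, ∀ j, 0 < (u ᵥ* B) j := by
  refine ⟨(B.det • 1 : J → ℤ) ᵥ* B.adjugate, fun j => ?_⟩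
  rw [vecMul_vecMul, adjugate_mul, vecMul_smul, vecMul_one, smul_smul]
  simpa using mul_self_pos.mpr (det_ne_zero_of_negDef B hneg)

lemma exists_inNE_isLat_sub (hneg : NegDef B) (l' : J → ℚ) :
    ∃ x, isLat (x - l') ∧ inNE B x := by
  obtain ⟨u, hu⟩ := exists_vecMul_pos B hneg
  obtain ⟨c, hc⟩ := (Set.finite_range fun j => -(l' ᵥ* B.map (↑)) j).bddAbove
  obtain ⟨k, hk⟩ := exists_nat_ge c
  refine ⟨l' + (k : ℚ) • (Int.cast ∘ u), ?_, fun j => ?_⟩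
  · convert isLat_intCast ((k : ℤ) • u) using 1
    ext j
    simp
  have hu1 : (1 : ℚ) ≤ ((Int.cast ∘ u) ᵥ* B.map (↑)) j := by
    have h := (Int.castRingHom ℚ).map_vecMul B u j
    rw [Int.coe_castRingHom] at h
    exact h ▸ Int.cast_one_le_of_pos (hu j)
  have hl' : -(l' ᵥ* B.map (↑)) j ≤ c := hc ⟨j, rfl⟩
  rw [bform_single, add_vecMul, smul_vecMul, Pi.add_apply, Pi.smul_apply, smul_eq_mul]
  nlinarith [(Nat.cast_nonneg k : (0 : ℚ) ≤ k)]

def repsNE (l' : J → ℚ) : Set (J → ℚ) := {x | isLat (x - l') ∧ inNE B x}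

lemma exists_isGreatest_repsNE (hneg : NegDef B) (hoff : ∀ i j, i ≠ j → 0 ≤ B i j)
    (l' : J → ℚ) : ∃ x, IsGreatest (repsNE B l') x :=
  exists_isGreatest_of_supClosed l' (fun _ hx => hx.1)
    ((supClosed_isLat_sub l').inter (supClosed_inNE B hoff))
    (exists_inNE_isLat_sub B hneg l')
    ⟨0, fun _ hx => inNE_le_zero B hneg hoff hx.2⟩

lemma isGreatest_repsNE_iff {l' x : J → ℚ} :
    IsGreatest (repsNE B l') x ↔
      isLat (x - l') ∧ inNE B x ∧ ∀ y, isLat (y - l') → inNE B y → y ≤ x := by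
  simp only [IsGreatest, upperBounds, repsNE, Set.mem_ofPred_eq, and_imp, and_assoc]

lemma isGreatest_repsNE_neg_iff {l' z : J → ℚ} :
    IsGreatest (repsNE B (-l')) (-z) ↔
      isLat (z - l') ∧ inNE B (-z) ∧ ∀ y, isLat (y - l') → inNE B (-y) → z ≤ y := by
  have hlat : ∀ y : J → ℚ, isLat (-y - -l') ↔ isLat (y - l') := fun y => by
    rw [← isLat_neg_iff, neg_sub, sub_neg_eq_add, neg_add_eq_sub]
  rw [isGreatest_repsNE_iff, hlat]
  refine and_congr_right' (and_congr_right' ((Equiv.neg (J → ℚ)).forall_congr fun y => ?_))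
  rw [Equiv.neg_apply, ← hlat, neg_neg, le_neg]

end Cone

theorem stmt5_general {J : Type*} [Fintype J] [DecidableEq J]
    (B : Matrix J J ℤ)
    (hneg : NegDef B)
    (hoff : ∀ i j, i ≠ j → 0 ≤ B i j)
    (l' : J → ℚ) :
    (∃! x : J → ℚ, isLat (x - l') ∧ inNE B x ∧
        ∀ y : J → ℚ, isLat (y - l') → inNE B y → y ≤ x) ∧
    (∃! z : J → ℚ, isLat (z - l') ∧ inNE B (-z) ∧
        ∀ y : J → ℚ, isLat (y - l') → inNE B (-y) → z ≤ y) ∧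
    (∀ x z : J → ℚ,
      -- `x` is the maximal representative of the class of `-l'` in `NE_ℚ`
      (isLat (x + l') ∧ inNE B x ∧
        ∀ y : J → ℚ, isLat (y + l') → inNE B y → y ≤ x) →
      -- `z` is the minimal representative of the class of `l'` in `-NE_ℚ`
      (isLat (z - l') ∧ inNE B (-z) ∧
        ∀ y : J → ℚ, isLat (y - l') → inNE B (-y) → z ≤ y) →
      z = -x) := by
  obtain ⟨x₁, hx₁⟩ := exists_isGreatest_repsNE B hneg hoff l'
  obtain ⟨x₂, hx₂⟩ := exists_isGreatest_repsNE B hneg hoff (-l')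
  refine ⟨⟨x₁, (isGreatest_repsNE_iff B).mp hx₁,
      fun y hy => ((isGreatest_repsNE_iff B).mpr hy).unique hx₁⟩,
    ⟨-x₂, (isGreatest_repsNE_neg_iff B).mp (by rwa [neg_neg]),
      fun z hz => neg_eq_iff_eq_neg.mp (((isGreatest_repsNE_neg_iff B).mpr hz).unique hx₂)⟩,
    fun x z hx hz => ?_⟩
  simp only [← sub_neg_eq_add] at hx
  exact neg_eq_iff_eq_neg.mp
    (((isGreatest_repsNE_neg_iff B).mpr hz).unique ((isGreatest_repsNE_iff B).mpr hx))

/-- each class `h ∈ L'/L` has a unique maximal representative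
`l'_{ne}(h)` in `NE_ℚ`, a unique minimal representative `\bar l'_{ne}(h)` in
`-NE_ℚ`, and `\bar l'_{ne}(h) = - l'_{ne}(-h)`. -/
theorem stmt5 {J : Type*} [Fintype J] [DecidableEq J]
    (B : Matrix J J ℤ)
    (hsym : B.IsSymm)
    (hneg : NegDef B)
    (hoff : ∀ i j, i ≠ j → 0 ≤ B i j)
    (l' : J → ℚ) (hl' : isDual B l') :
    (∃! x : J → ℚ, isLat (x - l') ∧ inNE B x ∧
        ∀ y : J → ℚ, isLat (y - l') → inNE B y → y ≤ x) ∧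
    (∃! z : J → ℚ, isLat (z - l') ∧ inNE B (-z) ∧
        ∀ y : J → ℚ, isLat (y - l') → inNE B (-y) → z ≤ y) ∧
    (∀ x z : J → ℚ,
      -- `x` is the maximal representative of the class of `-l'` in `NE_ℚ`
      (isLat (x + l') ∧ inNE B x ∧
        ∀ y : J → ℚ, isLat (y + l') → inNE B y → y ≤ x) →
      -- `z` is the minimal representative of the class of `l'` in `-NE_ℚ`
      (isLat (z - l') ∧ inNE B (-z) ∧
        ∀ y : J → ℚ, isLat (y - l') → inNE B (-y) → z ≤ y) →
      z = -x) :=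
  stmt5_general B hneg hoff l'
end

section
/- Consider the A₄ singularity lattice: L generated by E₁, E₂, E₃ with (E_i,E_i) = −2 and (E₁,E₂) = (E₂,E₃) = 1, (E₁,E₃) = 0. Let h be the class of −D₂ = (1/2, 1, 1/2) in L'/L. Then \bar{l}'_{ne}(h) = (1/2, 1, 1/2) while l'_e(h) = (1/2, 0, 1/2), so \bar{l}'_{ne}(h) ≠ l'_e(h); nevertheless χ(\bar{l}'_{ne}(h)) = χ(l'_e(h)). -/
open Matrix

variable {J : Type*}

/-- The intersection matrix of the `A₄` singularity. -/
def A4 : Matrix (Fin 3) (Fin 3) ℤ := !![-2, 1, 0; 1, -2, 1; 0, 1, -2]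

/-- `\bar l'_{ne}(h) = -D₂ = (1/2, 1, 1/2)`. -/
def xbar : Fin 3 → ℚ := ![1/2, 1, 1/2]

/-- `l'_e(h) = (1/2, 0, 1/2)`. -/
def xe : Fin 3 → ℚ := ![1/2, 0, 1/2]

/-!
Everything reduces to the three intersection numbers `(x, E_j)` of a cycle on `A₄`.
Writing a representative of `h` as `xbar + m` with `m` integral, effectivity bounds each
`m_j` below by `-1/2`, hence by `0`; the anti-nef condition gives `m₁ ≤ 2m₀`, `m₁ ≤ 2m₂`,
`m₀ + m₂ ≤ 2m₁ + 1`, which over `ℤ` again force `m ≥ 0`.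
Finally `xbar - xe = E₁` is `K`-orthogonal and `(xbar, xbar) = (xe, xe) = -1`.
-/

section Bform

variable [Fintype J]

lemma bform_add_right (B : Matrix J J ℤ) (x y z : J → ℚ) :
    bform B x (y + z) = bform B x y + bform B x z := by
  simp only [bform, mulVec_add, dotProduct_add]

lemma bform_sub_left (B : Matrix J J ℤ) (x y z : J → ℚ) :
    bform B (x - y) z = bform B x z - bform B y z := by
  simp only [bform, sub_dotProduct]

lemma bform_neg_left (B : Matrix J J ℤ) (x y : J → ℚ) :
    bform B (-x) y = -bform B x y := by
  simp only [bform, neg_dotProduct]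

lemma bform_comm {B : Matrix J J ℤ} (hB : B.IsSymm) (x y : J → ℚ) :
    bform B x y = bform B y x := by
  have hB' : (B.map (fun n => (n : ℚ)))ᵀ = B.map (fun n => (n : ℚ)) := by
    rw [← transpose_map, hB.eq]
  rw [bform, bform, dotProduct_mulVec, ← mulVec_transpose, hB', dotProduct_comm]

lemma bform_single_right [DecidableEq J] (B : Matrix J J ℤ) (x : J → ℚ) (j : J) :
    bform B x (Pi.single j 1) = ∑ i, x i * B i j := by
  simp [bform, dotProduct]

lemma inNE_neg_iff [DecidableEq J] (B : Matrix J J ℤ) (x : J → ℚ) :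
    inNE B (-x) ↔ ∀ j, bform B x (Pi.single j 1) ≤ 0 := by
  simp only [inNE, bform_neg_left, neg_nonneg]

lemma chi_eq_chi_of_bform_eq (B : Matrix J J ℤ) {K x y : J → ℚ}
    (hself : bform B x x = bform B y y) (hK : bform B (x - y) K = 0) :
    chi B K x = chi B K y := by
  rw [bform_sub_left] at hK
  simp only [chi, bform_add_right, hself]
  linarith

end Bform

section Lattice

lemma isLat.sub {x y : J → ℚ} (hx : isLat x) (hy : isLat y) : isLat (x - y) := fun j => by
  obtain ⟨a, ha⟩ := hx j
  obtain ⟨b, hb⟩ := hy j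
  exact ⟨a - b, by simp [ha, hb]⟩

lemma le_of_isLat_sub_of_mem_unitCube {x y : J → ℚ} (hx : ∀ j, 0 ≤ x j ∧ x j < 1)
    (hxy : isLat (y - x)) (hy : Effective y) : x ≤ y := fun j => by
  obtain ⟨m, hm⟩ := hxy j
  have hm' : y j = x j + m := by rw [← hm, Pi.sub_apply]; ring
  have hm_gt : (-1 : ℤ) < m := by exact_mod_cast (by linarith [hy j, (hx j).2] : (-1 : ℚ) < m)
  have hm_nonneg : (0 : ℚ) ≤ m := by exact_mod_cast Int.lt_iff_add_one_le.mp hm_gt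
  linarith

end Lattice

section A4

lemma A4_isSymm : A4.IsSymm := by
  ext i j
  fin_cases i <;> fin_cases j <;> rfl

@[simp]
lemma bform_A4_single_zero (x : Fin 3 → ℚ) : bform A4 x (Pi.single 0 1) = -2 * x 0 + x 1 := by
  simp [bform_single_right, Fin.sum_univ_three, A4, mul_comm]

@[simp]
lemma bform_A4_single_one (x : Fin 3 → ℚ) :
    bform A4 x (Pi.single 1 1) = x 0 - 2 * x 1 + x 2 := by
  simp [bform_single_right, Fin.sum_univ_three, A4, mul_comm, sub_eq_add_neg]

@[simp]
lemma bform_A4_single_two (x : Fin 3 → ℚ) : bform A4 x (Pi.single 2 1) = x 1 - 2 * x 2 := by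
  simp [bform_single_right, Fin.sum_univ_three, A4, mul_comm, sub_eq_add_neg]

lemma bform_A4_self (x : Fin 3 → ℚ) :
    bform A4 x x = -2 * (x 0 ^ 2 + x 1 ^ 2 + x 2 ^ 2) + 2 * (x 0 * x 1 + x 1 * x 2) := by
  simp only [bform, dotProduct, mulVec, Fin.sum_univ_three, A4, map_apply, of_apply, cons_val',
    cons_val_zero, cons_val_one, cons_val, cons_val_fin_one]
  push_cast
  ring

lemma xbar_sub_xe : xbar - xe = Pi.single 1 1 := by
  ext j
  fin_cases j <;> simp [xbar, xe]

lemma bform_xbar_single (j : Fin 3) :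
    bform A4 xbar (Pi.single j 1) = if j = 1 then -1 else 0 := by
  fin_cases j <;> norm_num [bform_single_right, Fin.sum_univ_three, A4, xbar, cons_val_two]

lemma isLat_xe_sub_xbar : isLat (xe - xbar) := by
  rw [← neg_sub, xbar_sub_xe]
  intro j
  fin_cases j
  · exact ⟨0, by simp⟩
  · exact ⟨-1, by simp⟩
  · exact ⟨0, by simp⟩

lemma xe_mem_unitCube (j : Fin 3) : 0 ≤ xe j ∧ xe j < 1 := by
  fin_cases j <;> norm_num [xe]

lemma xe_le_of_effective {y : Fin 3 → ℚ} (hy : isLat (y - xbar)) (hy_eff : Effective y) :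
    xe ≤ y :=
  le_of_isLat_sub_of_mem_unitCube xe_mem_unitCube (by simpa using hy.sub isLat_xe_sub_xbar) hy_eff

lemma xbar_ne_xe : xbar ≠ xe := by
  intro h
  have h1 := congrFun xbar_sub_xe 1
  rw [h, sub_self] at h1
  simp at h1

lemma inNE_neg_xbar : inNE A4 (-xbar) := by
  rw [inNE_neg_iff]
  intro j
  rw [bform_xbar_single]
  split_ifs <;> norm_num

lemma xbar_le_of_inNE_neg {z : Fin 3 → ℚ} (hz : isLat (z - xbar)) (hne : inNE A4 (-z)) :
    xbar ≤ z := by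
  choose m hm using hz
  have hzm : ∀ j, z j = xbar j + m j := fun j => by rw [← hm j, Pi.sub_apply]; ring
  rw [inNE_neg_iff] at hne
  have h0 := hne 0
  have h1 := hne 1
  have h2 := hne 2
  simp only [bform_A4_single_zero, bform_A4_single_one, bform_A4_single_two, hzm] at h0 h1 h2
  norm_num [xbar, cons_val_two] at h0 h1 h2
  have k0 : m 1 ≤ 2 * m 0 := by exact_mod_cast (by linarith : (m 1 : ℚ) ≤ 2 * m 0)
  have k1 : m 0 + m 2 ≤ 2 * m 1 + 1 := by
    exact_mod_cast (by linarith : (m 0 + m 2 : ℚ) ≤ 2 * m 1 + 1)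
  have k2 : m 1 ≤ 2 * m 2 := by exact_mod_cast (by linarith : (m 1 : ℚ) ≤ 2 * m 2)
  -- Over `ℚ` these inequalities allow `m = (-1/4, -1/2, -1/4)`; integrality is essential.
  have hm_nonneg : ∀ j, (0 : ℚ) ≤ m j := fun j => by
    have : 0 ≤ m 0 ∧ 0 ≤ m 1 ∧ 0 ≤ m 2 := by omega
    fin_cases j <;> simp [this]
  intro j
  linarith [hzm j, hm_nonneg j]

end A4

/-- for the `A₄` lattice and the class `h` of `-D₂`, one has
`\bar l'_{ne}(h) = (1/2,1,1/2)`, `l'_e(h) = (1/2,0,1/2)`, these differ, yet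
their `χ`-values agree. -/
theorem stmt17 (K : Fin 3 → ℚ)
    (hK : ∀ j, bform A4 K (Pi.single j 1) = -(A4 j j : ℚ) - 2) :
    -- `xbar = -D₂`, i.e. `(xbar, E_i) = -δ_{2i}`
    (∀ j, bform A4 xbar (Pi.single j 1) = if j = 1 then -1 else 0) ∧
    -- `xe` lies in the same class `h` and in the unit cube `Q`
    isLat (xe - xbar) ∧ (∀ j, 0 ≤ xe j ∧ xe j < 1) ∧
    -- `xbar` is the minimal representative of `h` in `-NE_ℚ`
    inNE A4 (-xbar) ∧
    (∀ z : Fin 3 → ℚ, isLat (z - xbar) → inNE A4 (-z) → xbar ≤ z) ∧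
    -- `xe` is the minimal effective representative of `h`
    Effective xe ∧
    (∀ y : Fin 3 → ℚ, isLat (y - xbar) → Effective y → xe ≤ y) ∧
    -- they differ, yet have equal Euler characteristics
    xbar ≠ xe ∧ chi A4 K xbar = chi A4 K xe := by
  have hK_orth : bform A4 (xbar - xe) K = 0 := by
    rw [bform_comm A4_isSymm, xbar_sub_xe, hK 1]
    simp [A4]
  refine ⟨bform_xbar_single, isLat_xe_sub_xbar, xe_mem_unitCube, inNE_neg_xbar,
    fun _ => xbar_le_of_inNE_neg, fun j => (xe_mem_unitCube j).1, fun _ => xe_le_of_effective,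
    xbar_ne_xe, ?_⟩
  exact chi_eq_chi_of_bform_eq A4 (by norm_num [bform_A4_self, xbar, xe, cons_val_two]) hK_orth
end
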